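/- arXiv:2512.22911 — 4 statements merged into one kernel-verified Lean document; each statement's English description precedes it below -/
import Mathlib

section
/- Let q = p^m, let α₁,…,α_n ∈ F_q be distinct, β ∈ F_q nonzero, and let C be the set of vectors {(χ_β(f(α₁)),…,χ_β(f(α_n))) : f ∈ F(k,q)} where χ_β(α) = exp(2πi·Tr(βα)/p). Then |C| = p^r for some integer r, and p^n / q^{n−k} ≤ |C| ≤ min{p^n, q^k}. Moreover, both inequalities are equalities when k = n or q = p. -/
/-!
The map `T : f ↦ (Tr(β f(αⱼ)))ⱼ` is `𝔽_p`-linear and `χ_β` is injective on `𝔽_p`, so the code has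
`p ^ r` elements, `r` being the `𝔽_p`-dimension of `T(F(k,q))`. Factor `T` as evaluation at the
nodes, whose image is the Reed–Solomon code of `F`-dimension `k`, followed by `v ↦ (Tr(β vⱼ))ⱼ`,
which maps `F^n` onto `𝔽_p^n`. Hence `r ≤ n` and `r ≤ mk`, and since a surjection cannot increase
codimension, `n - r ≤ m(n - k)`. The bounds and their equality cases are arithmetic on these three
inequalities between exponents.
-/

open Polynomial

/-- The CRS character vector `(χ_β(f(α₁)),…,χ_β(f(αₙ)))` of a polynomial `f`,
where `χ_β(a) = exp(2πi·Tr(βa)/p)` and `Tr : F_q → F_p` is the absolute trace. -/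
noncomputable def crsVec (p : ℕ) [Fact p.Prime] (F : Type*) [Field F] [Fintype F]
    [Algebra (ZMod p) F] {n : ℕ} (α : Fin n → F) (β : F) (f : Polynomial F) :
    Fin n → ℂ :=
  fun j => Complex.exp (2 * Real.pi * Complex.I *
    (((Algebra.trace (ZMod p) F (β * f.eval (α j))).val : ℂ)) / p)

open Module

namespace Submodule

variable {K V W : Type*} [Field K] [AddCommGroup V] [Module K V] [AddCommGroup W] [Module K W]
  [FiniteDimensional K V]

/-- `f` induces a surjection `V ⧸ S → W ⧸ f(S)`. -/
theorem finrank_le_finrank_map_add_of_surjective {f : V →ₗ[K] W} (hf : Function.Surjective f)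
    (S : Submodule K V) :
    finrank K W ≤ finrank K (S.map f) + (finrank K V - finrank K S) := by
  have : FiniteDimensional K W := Module.Finite.of_surjective f hf
  have hmapQ : Function.Surjective (S.mapQ (S.map f) f (le_comap_map f S)) := by
    rw [← LinearMap.range_eq_top, range_mapQ, LinearMap.range_eq_top.mpr hf, map_top, range_mkQ]
  have hquot := LinearMap.finrank_le_finrank_of_surjective hmapQ
  have hW := (S.map f).finrank_quotient_add_finrank
  have hV := S.finrank_quotient_add_finrank
  omega

end Submodule

section TraceForm

variable (K : Type*) {F ι : Type*} [Field K] [Field F] [Algebra K F]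

noncomputable def traceMulLeft (β : F) : (ι → F) →ₗ[K] (ι → K) :=
  LinearMap.pi fun j => Algebra.trace K F ∘ₗ LinearMap.mulLeft K β ∘ₗ LinearMap.proj j

@[simp]
theorem traceMulLeft_apply (β : F) (v : ι → F) (j : ι) :
    traceMulLeft K β v j = Algebra.trace K F (β * v j) := rfl

theorem traceMulLeft_surjective [FiniteDimensional K F] [Algebra.IsSeparable K F] {β : F}
    (hβ : β ≠ 0) : Function.Surjective (traceMulLeft K (ι := ι) β) := by
  intro t
  choose c hc using fun j => Algebra.trace_surjective K F (t j)
  exact ⟨fun j => β⁻¹ * c j, funext fun j => by simp [mul_inv_cancel_left₀ hβ, hc]⟩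

end TraceForm

section ReedSolomon

variable {F ι : Type*} [Field F]

noncomputable def reedSolomon (α : ι → F) (k : ℕ) : Submodule F (ι → F) :=
  (degreeLT F k).map (LinearMap.pi fun j => leval (α j))

theorem mem_reedSolomon {α : ι → F} {k : ℕ} {v : ι → F} :
    v ∈ reedSolomon α k ↔ ∃ f : F[X], f.degree < k ∧ (fun j => f.eval (α j)) = v := by
  simp only [reedSolomon, Submodule.mem_map, mem_degreeLT]
  rfl

theorem finrank_reedSolomon [Fintype ι] {α : ι → F} (hα : Function.Injective α) {k : ℕ}
    (hk : k ≤ Fintype.card ι) : finrank F (reedSolomon α k) = k := by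
  classical
  have hinj :
      Function.Injective ((LinearMap.pi fun j => leval (α j)).domRestrict (degreeLT F k)) := by
    rw [← LinearMap.ker_eq_bot, eq_bot_iff]
    rintro ⟨f, hf⟩ hf0
    have hroots : ∀ j, f.eval (α j) = 0 := fun j => congrFun (LinearMap.mem_ker.mp hf0) j
    have hdeg : f.degree < (Finset.univ : Finset ι).card := by
      simpa using (mem_degreeLT.mp hf).trans_le (by exact_mod_cast hk)
    simpa using eq_zero_of_degree_lt_of_eval_index_eq_zero _ hα.injOn hdeg fun j _ => hroots j
  rw [reedSolomon, ← LinearMap.range_domRestrict, LinearMap.finrank_range_of_inj hinj,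
    (degreeLTEquiv F k).finrank_eq, finrank_fin_fun]

end ReedSolomon

section TraceCode

variable (K : Type*) {F ι : Type*} [Field K] [Field F] [Algebra K F] [Fintype ι]

noncomputable def traceCode (α : ι → F) (β : F) (k : ℕ) : Submodule K (ι → K) :=
  ((reedSolomon α k).restrictScalars K).map (traceMulLeft K β)

variable {K}

theorem finrank_traceCode_le_card (α : ι → F) (β : F) (k : ℕ) :
    finrank K (traceCode K α β k) ≤ Fintype.card ι :=
  (Submodule.finrank_le _).trans_eq (finrank_fintype_fun_eq_card K)

variable [FiniteDimensional K F]

theorem finrank_restrictScalars_reedSolomon (α : ι → F) (k : ℕ) :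
    finrank K ((reedSolomon α k).restrictScalars K) = finrank K F * finrank F (reedSolomon α k) :=
  (Module.finrank_mul_finrank K F (reedSolomon α k)).symm

theorem finrank_traceCode_le_finrank_mul (α : ι → F) (β : F) (k : ℕ) :
    finrank K (traceCode K α β k) ≤ finrank K F * k := by
  have hRS : finrank F (reedSolomon α k) ≤ k := by
    rw [reedSolomon]
    exact (Submodule.finrank_map_le _ _).trans_eq
      ((degreeLTEquiv F k).finrank_eq.trans (finrank_fin_fun F))
  calc finrank K (traceCode K α β k)
      ≤ finrank K ((reedSolomon α k).restrictScalars K) := Submodule.finrank_map_le _ _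
    _ = finrank K F * finrank F (reedSolomon α k) := finrank_restrictScalars_reedSolomon α k
    _ ≤ finrank K F * k := Nat.mul_le_mul_left _ hRS

theorem card_le_finrank_traceCode_add [Algebra.IsSeparable K F] {α : ι → F}
    (hα : Function.Injective α) {β : F} (hβ : β ≠ 0) {k : ℕ} (hk : k ≤ Fintype.card ι) :
    Fintype.card ι ≤ finrank K (traceCode K α β k) + finrank K F * (Fintype.card ι - k) := by
  have h := Submodule.finrank_le_finrank_map_add_of_surjective
    (traceMulLeft_surjective K (ι := ι) hβ) ((reedSolomon α k).restrictScalars K)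
  rw [finrank_fintype_fun_eq_card, finrank_restrictScalars_reedSolomon, finrank_reedSolomon hα hk,
    Module.finrank_pi_fintype, Finset.sum_const, Finset.card_univ, smul_eq_mul, mul_comm,
    ← Nat.mul_sub] at h
  exact h

end TraceCode

theorem pow_bounds_of_exponent_bounds {p m n k r : ℕ} (hp : 1 < p) (hrn : r ≤ n)
    (hrk : r ≤ m * k) (hnr : n ≤ r + m * (n - k)) :
    p ^ n ≤ p ^ r * (p ^ m) ^ (n - k) ∧ p ^ r ≤ min (p ^ n) ((p ^ m) ^ k) ∧
      ((k = n ∨ m = 1) →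
        p ^ n = p ^ r * (p ^ m) ^ (n - k) ∧ p ^ r = min (p ^ n) ((p ^ m) ^ k)) := by
  simp only [← pow_mul, ← pow_add, ← (pow_right_monotone hp.le).map_min,
    pow_le_pow_iff_right₀ hp, pow_right_inj₀ (by omega : 0 < p) hp.ne']
  refine ⟨hnr, le_min hrn hrk, ?_⟩
  rintro (rfl | rfl) <;> simp only [Nat.sub_self, mul_zero, one_mul] at hrk hnr ⊢ <;> omega

theorem crsVec_eq_toCircle (p : ℕ) [Fact p.Prime] (F : Type*) [Field F] [Fintype F]
    [Algebra (ZMod p) F] {n : ℕ} (α : Fin n → F) (β : F) (f : Polynomial F) :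
    crsVec p F α β f =
      fun j => (ZMod.toCircle (traceMulLeft (ZMod p) β (fun j => f.eval (α j)) j) : ℂ) := by
  funext j
  rw [ZMod.toCircle_apply]
  rfl

theorem ncard_crsCode (p : ℕ) [Fact p.Prime] (F : Type*) [Field F] [Fintype F]
    [Algebra (ZMod p) F] {n : ℕ} (α : Fin n → F) (β : F) (k : ℕ) :
    Set.ncard {v : Fin n → ℂ | ∃ f : F[X], f.degree < (k : WithBot ℕ) ∧ v = crsVec p F α β f} =
      p ^ finrank (ZMod p) (traceCode (ZMod p) α β k) := by
  have hset : {v : Fin n → ℂ | ∃ f : F[X], f.degree < (k : WithBot ℕ) ∧ v = crsVec p F α β f} =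
      (fun x j => (ZMod.toCircle (x j) : ℂ)) ''
        (traceCode (ZMod p) α β k : Set (Fin n → ZMod p)) := by
    ext v
    simp [traceCode, mem_reedSolomon, crsVec_eq_toCircle, eq_comm]
  have hinj : Function.Injective fun (x : Fin n → ZMod p) j => (ZMod.toCircle (x j) : ℂ) :=
    (Subtype.val_injective.comp ZMod.injective_toCircle).comp_left
  rw [hset, Set.ncard_image_of_injective _ hinj, ← Nat.card_coe_set_eq, SetLike.coe_sort_coe,
    Module.natCard_eq_pow_finrank (K := ZMod p), Nat.card_zmod]

theorem stmt4_general (p m n k : ℕ) [Fact p.Prime]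
    (F : Type*) [Field F] [Fintype F] [Algebra (ZMod p) F]
    (hq : Fintype.card F = p ^ m)
    (hkn : k ≤ n)
    (α : Fin n → F) (hα : Function.Injective α) (β : F) (hβ : β ≠ 0) :
    ∃ r : ℕ,
      Set.ncard {v : Fin n → ℂ | ∃ f : Polynomial F, f.degree < (k : WithBot ℕ) ∧
        v = crsVec p F α β f} = p ^ r ∧
      p ^ n ≤ p ^ r * (p ^ m) ^ (n - k) ∧
      p ^ r ≤ min (p ^ n) ((p ^ m) ^ k) ∧
      ((k = n ∨ m = 1) →
        p ^ n = p ^ r * (p ^ m) ^ (n - k) ∧ p ^ r = min (p ^ n) ((p ^ m) ^ k)) := by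
  have hp : 2 ≤ p := (Fact.out : p.Prime).two_le
  have : Module.Finite (ZMod p) F := Module.Finite.of_finite
  have hdim : finrank (ZMod p) F = m := by
    rw [Module.card_eq_pow_finrank (K := ZMod p), ZMod.card] at hq
    exact Nat.pow_right_injective hp hq
  have hrn := finrank_traceCode_le_card (K := ZMod p) α β k
  have hrk := finrank_traceCode_le_finrank_mul (K := ZMod p) α β k
  have hnr := card_le_finrank_traceCode_add (K := ZMod p) hα hβ (by simpa using hkn)
  rw [Fintype.card_fin] at hrn hnr
  rw [hdim] at hrk hnr
  exact ⟨_, ncard_crsCode p F α β k, pow_bounds_of_exponent_bounds hp hrn hrk hnr⟩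

/-- The size of the CRS code `C = {(χ_β(f(α₁)),…,χ_β(f(αₙ))) : deg f < k}` is a power
`p^r` of `p` satisfying `p^n / q^(n-k) ≤ |C| ≤ min (p^n) (q^k)` (stated
multiplicatively to avoid division), with both bounds attained when `k = n` or `q = p`. -/
theorem stmt4 (p m n k : ℕ) [Fact p.Prime] (hm : 0 < m)
    (F : Type*) [Field F] [Fintype F] [Algebra (ZMod p) F]
    (hq : Fintype.card F = p ^ m)
    (hk : 1 ≤ k) (hkn : k ≤ n) (hnq : n < p ^ m)
    (α : Fin n → F) (hα : Function.Injective α) (β : F) (hβ : β ≠ 0) :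
    ∃ r : ℕ,
      Set.ncard {v : Fin n → ℂ | ∃ f : Polynomial F, f.degree < (k : WithBot ℕ) ∧
        v = crsVec p F α β f} = p ^ r ∧
      p ^ n ≤ p ^ r * (p ^ m) ^ (n - k) ∧
      p ^ r ≤ min (p ^ n) ((p ^ m) ^ k) ∧
      ((k = n ∨ m = 1) →
        p ^ n = p ^ r * (p ^ m) ^ (n - k) ∧ p ^ r = min (p ^ n) ((p ^ m) ^ k)) :=
  stmt4_general p m n k F hq hkn α hα β hβ
end

section
/- Let C be an [n, k] generalized Reed–Solomon code over F_q with d = n − k + 1. For any y ∈ F_q^n, the iterative puncturing procedure — which at step i (starting at i = 0) attempts to find a codeword of the i-times-punctured code (punctured at the last i coordinates) within its unique decoding radius of the truncation y[1..n−i], and on success re-encodes the recovered message polynomial in C — terminates after at most d − 1 punctures and returns a codeword c ∈ C with Hamming distance d_H(y, c) ≤ d − 1. -/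
/-!
Truncating a word to its first `n - i` coordinates loses at most `i` disagreements, so a
codeword of the `i`-times punctured code within radius `(n - k - i) / 2` of the truncated word
re-encodes to a codeword of `C` within `(n - k - i) / 2 + i ≤ n - k = d - 1` of the full word.
Decoding always succeeds at step `i = n - k`: the punctured code then has length at most `k`,
so it is the whole space (Lagrange interpolation) and the radius `0` suffices.
-/

open Polynomial

theorem hammingDist_le_hammingDist_comp_castLE_add {β : Type*} [DecidableEq β] {m n : ℕ}
    (h : m ≤ n) (x y : Fin n → β) :
    hammingDist x y ≤ hammingDist (x ∘ Fin.castLE h) (y ∘ Fin.castLE h) + (n - m) := by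
  set e := Fin.castLEEmb h
  have hcover : ({j | x j ≠ y j} : Finset (Fin n)) ⊆
      ({j | x (e j) ≠ y (e j)} : Finset (Fin m)).map e ∪ (Finset.univ \ Finset.univ.map e) := by
    intro j hj
    by_cases hje : j ∈ Finset.univ.map e
    · obtain ⟨j', -, rfl⟩ := Finset.mem_map.mp hje
      exact Finset.mem_union_left _ (Finset.mem_map_of_mem e (by simpa using hj))
    · exact Finset.mem_union_right _ (Finset.mem_sdiff.mpr ⟨Finset.mem_univ j, hje⟩)
  calc hammingDist x y ≤ _ := Finset.card_le_card hcover
    _ ≤ _ := Finset.card_union_le _ _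
    _ = hammingDist (x ∘ Fin.castLE h) (y ∘ Fin.castLE h) + (n - m) := by
      rw [Finset.card_map, Finset.card_sdiff_of_subset (Finset.subset_univ _), Finset.card_map,
        Finset.card_univ, Finset.card_univ, Fintype.card_fin, Fintype.card_fin]
      rfl

def grsEncode {F : Type*} [Field F] {n : ℕ} (α v : Fin n → F) (f : F[X]) : Fin n → F :=
  fun j => v j * f.eval (α j)

theorem exists_degree_lt_grsEncode_eq {F : Type*} [Field F] {n : ℕ} {α v : Fin n → F}
    (hα : Function.Injective α) (hv : ∀ j, v j ≠ 0) (y : Fin n → F) :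
    ∃ f : F[X], f.degree < n ∧ grsEncode α v f = y := by
  have hαinj : Set.InjOn α (Finset.univ : Finset (Fin n)) := hα.injOn
  refine ⟨Lagrange.interpolate Finset.univ α (fun j => y j / v j), ?_, ?_⟩
  · simpa using Lagrange.degree_interpolate_lt (fun j => y j / v j) hαinj
  · funext j
    rw [grsEncode, Lagrange.eval_interpolate_at_node _ hαinj (Finset.mem_univ j),
      mul_div_cancel₀ _ (hv j)]

theorem stmt6_general (F : Type*) [Field F] [DecidableEq F] (n k : ℕ)
    (α : Fin n → F) (hα : Function.Injective α) (v : Fin n → F) (hv : ∀ i, v i ≠ 0)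
    (y : Fin n → F) :
    (∃ i ≤ n - k, ∃ f : Polynomial F, f.degree < (k : WithBot ℕ) ∧
      hammingDist (fun j : Fin (n - i) => y (Fin.castLE (Nat.sub_le n i) j))
        (fun j : Fin (n - i) => v (Fin.castLE (Nat.sub_le n i) j) *
          f.eval (α (Fin.castLE (Nat.sub_le n i) j))) ≤ (n - k - i) / 2) ∧
    (∀ i ≤ n - k, ∀ f : Polynomial F, f.degree < (k : WithBot ℕ) →
      hammingDist (fun j : Fin (n - i) => y (Fin.castLE (Nat.sub_le n i) j))
        (fun j : Fin (n - i) => v (Fin.castLE (Nat.sub_le n i) j) *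
          f.eval (α (Fin.castLE (Nat.sub_le n i) j))) ≤ (n - k - i) / 2 →
      hammingDist y (fun j => v j * f.eval (α j)) ≤ n - k) := by
  refine ⟨⟨n - k, le_rfl, ?_⟩, fun i hi f _ hdist => ?_⟩
  · set c := Fin.castLE (Nat.sub_le n (n - k))
    obtain ⟨f, hdeg, hf⟩ := exists_degree_lt_grsEncode_eq (v := v ∘ c)
      (hα.comp (Fin.castLE_injective _)) (fun j => hv (c j)) (y ∘ c)
    refine ⟨f, hdeg.trans_le (by exact_mod_cast (by omega : n - (n - k) ≤ k)), ?_⟩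
    rw [show (fun j => v (c j) * f.eval (α (c j))) = y ∘ c from hf]
    exact (hammingDist_self _).trans_le (Nat.zero_le _)
  · calc hammingDist y (fun j => v j * f.eval (α j))
        ≤ (n - k - i) / 2 + (n - (n - i)) :=
          (hammingDist_le_hammingDist_comp_castLE_add (Nat.sub_le n i) _ _).trans
            (Nat.add_le_add_right hdist _)
      _ ≤ n - k := by omega

/-- Correctness of the iterative puncturing covering procedure for an `[n, k]` GRS code
with `d = n - k + 1`:  (i) there is some number of punctures `i ≤ d - 1 = n - k` at which
unique decoding of the truncated word (within radius `⌊(d-1-i)/2⌋ = (n-k-i)/2`) succeeds;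
(ii) whenever it succeeds at step `i ≤ n - k`, the re-encoded codeword is within Hamming
distance `d - 1 = n - k` of `y`. -/
theorem stmt6 (F : Type*) [Field F] [DecidableEq F] (n k : ℕ) (hk : 1 ≤ k) (hkn : k ≤ n)
    (α : Fin n → F) (hα : Function.Injective α) (v : Fin n → F) (hv : ∀ i, v i ≠ 0)
    (y : Fin n → F) :
    (∃ i ≤ n - k, ∃ f : Polynomial F, f.degree < (k : WithBot ℕ) ∧
      hammingDist (fun j : Fin (n - i) => y (Fin.castLE (Nat.sub_le n i) j))
        (fun j : Fin (n - i) => v (Fin.castLE (Nat.sub_le n i) j) *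
          f.eval (α (Fin.castLE (Nat.sub_le n i) j))) ≤ (n - k - i) / 2) ∧
    (∀ i ≤ n - k, ∀ f : Polynomial F, f.degree < (k : WithBot ℕ) →
      hammingDist (fun j : Fin (n - i) => y (Fin.castLE (Nat.sub_le n i) j))
        (fun j : Fin (n - i) => v (Fin.castLE (Nat.sub_le n i) j) *
          f.eval (α (Fin.castLE (Nat.sub_le n i) j))) ≤ (n - k - i) / 2 →
      hammingDist y (fun j => v j * f.eval (α j)) ≤ n - k) :=
  stmt6_general F n k α hα v hv y
end

section
/- Let c₁, c₂ ∈ F_q^n with Hamming distance d_H(c₁, c₂) = w, and let τ ≥ 0. Then the number of vectors y ∈ F_q^n with d_H(y, c₁) ≤ τ and d_H(y, c₂) ≤ τ equals Σ_{z=0}^{n−w} C(n−w, z) (q−1)^{n−w−z} · Σ_{u,v} C(w, u) C(w−u, v) (q−2)^{w−u−v}, where the inner sum ranges over pairs (u, v) with n−τ−z ≤ u ≤ τ, n−τ−z ≤ v ≤ τ, and u + v ≤ w. -/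
open Finset

set_option maxHeartbeats 4000000

/-- Exact size of the intersection of two Hamming balls of radius `τ` around codewords
`c₁, c₂ ∈ F_q^n` at Hamming distance `w`: it equals
`Σ_{z=0}^{n-w} C(n-w,z)(q-1)^{n-w-z} · Σ_{u,v} C(w,u) C(w-u,v) (q-2)^{w-u-v}`,
where the inner sum is over `n-τ-z ≤ u ≤ τ`, `n-τ-z ≤ v ≤ τ`, `u + v ≤ w`. -/
theorem stmt9 (q n w τ : ℕ) (F : Type*) [Fintype F] [DecidableEq F]
    (hF : Fintype.card F = q)
    (c₁ c₂ : Fin n → F) (hw : hammingDist c₁ c₂ = w) :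
    Set.ncard {y : Fin n → F | hammingDist y c₁ ≤ τ ∧ hammingDist y c₂ ≤ τ} =
      ∑ z ∈ Finset.range (n - w + 1), (n - w).choose z * (q - 1) ^ (n - w - z) *
        ∑ u ∈ Finset.range (τ + 1), ∑ v ∈ Finset.range (τ + 1),
          if n - τ - z ≤ u ∧ n - τ - z ≤ v ∧ u + v ≤ w then
            w.choose u * (w - u).choose v * (q - 2) ^ (w - u - v)
          else 0 := by
  classical
  set D : Finset (Fin n) := Finset.univ.filter (fun i => c₁ i ≠ c₂ i) with hD
  set E : Finset (Fin n) := Finset.univ.filter (fun i => c₁ i = c₂ i) with hE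
  have hDc : D.card = w := by rw [← hw]; rfl
  have hwn : w ≤ n := by
    rw [← hw]
    simpa using (hammingDist_le_card_fintype (x := c₁) (y := c₂))
  have hEDc : E = Dᶜ := by ext i; simp [hE, hD]
  have hEc : E.card = n - w := by rw [hEDc, card_compl, Fintype.card_fin, hDc]
  have hdistf : ∀ (y c : Fin n → F),
      hammingDist y c = n - (Finset.univ.filter fun i => y i = c i).card := by
    intro y c
    have h1 : (Finset.univ.filter fun i => y i ≠ c i)
        = (Finset.univ.filter fun i => y i = c i)ᶜ := by ext i; simp
    show (Finset.univ.filter fun i => y i ≠ c i).card = _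
    rw [h1, card_compl, Fintype.card_fin]
  set S : Finset (Fin n → F) :=
    Finset.univ.filter (fun y => hammingDist y c₁ ≤ τ ∧ hammingDist y c₂ ≤ τ) with hSdef
  have hset : {y : Fin n → F | hammingDist y c₁ ≤ τ ∧ hammingDist y c₂ ≤ τ} = ↑S := by
    ext y; simp [hSdef]
  rw [hset, Set.ncard_coe_finset]
  set Φ : (Fin n → F) → Finset (Fin n) × Finset (Fin n) × Finset (Fin n) :=
    fun y => (E.filter fun i => y i = c₁ i,
      D.filter fun i => y i = c₁ i, D.filter fun i => y i = c₂ i) with hΦ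
  have hmaps : ∀ y ∈ S, Φ y ∈ E.powerset ×ˢ D.powerset ×ˢ D.powerset := by
    intro y _
    simp [hΦ, Finset.mem_product, Finset.filter_subset]
  rw [Finset.card_eq_sum_card_fiberwise hmaps]
  rw [Finset.sum_product]
  simp only [Finset.sum_product]
  -- characterization of fibers
  have hchar : ∀ (A U V : Finset (Fin n)) (y : Fin n → F),
      Φ y = (A, (U, V)) ↔ ∀ i,
        ((c₁ i = c₂ i ∧ y i = c₁ i) ↔ i ∈ A) ∧
        ((c₁ i ≠ c₂ i ∧ y i = c₁ i) ↔ i ∈ U) ∧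
        ((c₁ i ≠ c₂ i ∧ y i = c₂ i) ↔ i ∈ V) := by
    intro A U V y
    simp only [hΦ, Prod.mk.injEq, Finset.ext_iff, Finset.mem_filter, hE, hD,
      Finset.mem_univ, true_and, and_assoc, ← forall_and]
  have hEDdis : Disjoint E D := by
    rw [hEDc]; exact disjoint_compl_left
  have hcards : ∀ (A U V : Finset (Fin n)), A ⊆ E → U ⊆ D → V ⊆ D →
      ∀ y : Fin n → F, Φ y = (A, (U, V)) →
      hammingDist y c₁ = n - A.card - U.card ∧
      hammingDist y c₂ = n - A.card - V.card := by
    intro A U V hA hU hV y hy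
    have hch := (hchar A U V y).1 hy
    have h1 : (Finset.univ.filter fun i => y i = c₁ i) = A ∪ U := by
      ext i
      have := hch i
      simp only [Finset.mem_filter, Finset.mem_univ, true_and, Finset.mem_union]
      by_cases hc : c₁ i = c₂ i <;> tauto
    have h2 : (Finset.univ.filter fun i => y i = c₂ i) = A ∪ V := by
      ext i
      have := hch i
      simp only [Finset.mem_filter, Finset.mem_univ, true_and, Finset.mem_union]
      by_cases hc : c₁ i = c₂ i
      · rw [← hc] at this ⊢; tauto
      · tauto
    have hAU : Disjoint A U := hEDdis.mono hA hU
    have hAV : Disjoint A V := hEDdis.mono hA hV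
    constructor
    · rw [hdistf, h1, Finset.card_union_of_disjoint hAU, Nat.sub_sub]
    · rw [hdistf, h2, Finset.card_union_of_disjoint hAV, Nat.sub_sub]
  -- the fiber cardinality
  have hfiber : ∀ A ∈ E.powerset, ∀ U ∈ D.powerset, ∀ V ∈ D.powerset,
      (S.filter fun y => Φ y = (A, (U, V))).card =
        if Disjoint U V ∧ n - A.card - U.card ≤ τ ∧ n - A.card - V.card ≤ τ then
          (q - 1) ^ (n - w - A.card) * (q - 2) ^ (w - U.card - V.card)
        else 0 := by
    intro A hA U hU V hV
    rw [Finset.mem_powerset] at hA hU hV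
    by_cases hcond : Disjoint U V ∧ n - A.card - U.card ≤ τ ∧ n - A.card - V.card ≤ τ
    · rw [if_pos hcond]
      obtain ⟨hUV, ht1, ht2⟩ := hcond
      have hfil : S.filter (fun y => Φ y = (A, (U, V)))
          = Finset.univ.filter (fun y => Φ y = (A, (U, V))) := by
        rw [hSdef, Finset.filter_filter]
        apply Finset.filter_congr
        intro y _
        constructor
        · exact And.right
        · intro hy
          obtain ⟨e1, e2⟩ := hcards A U V hA hU hV y hy
          exact ⟨⟨by rw [e1]; exact ht1, by rw [e2]; exact ht2⟩, hy⟩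
      set g : (i : Fin n) → Finset F := fun i =>
        if i ∈ A ∨ i ∈ U then {c₁ i} else if i ∈ V then {c₂ i}
        else if c₁ i = c₂ i then {c₁ i}ᶜ else {c₁ i, c₂ i}ᶜ with hg
      have hpi : Finset.univ.filter (fun y => Φ y = (A, (U, V))) = Fintype.piFinset g := by
        ext y
        simp only [Finset.mem_filter, Finset.mem_univ, true_and,
          Fintype.mem_piFinset, hchar]
        constructor
        · intro h i
          obtain ⟨e1, e2, e3⟩ := h i
          by_cases h1 : i ∈ A
          · have := e1.2 h1
            simp [hg, h1, this.2]
          · by_cases h2 : i ∈ U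
            · have := e2.2 h2
              simp [hg, h2, this.2]
            · by_cases h3 : i ∈ V
              · have := e3.2 h3
                simp only [hg]
                rw [if_neg (by tauto), if_pos h3]
                simp [this.2]
              · simp only [hg]
                rw [if_neg (by tauto), if_neg h3]
                by_cases h4 : c₁ i = c₂ i
                · rw [if_pos h4]
                  simp only [Finset.mem_compl, Finset.mem_singleton]
                  intro hyc; exact h1 (e1.1 ⟨h4, hyc⟩)
                · rw [if_neg h4]
                  simp only [Finset.mem_compl, Finset.mem_insert, Finset.mem_singleton]
                  push_neg
                  exact ⟨fun hyc => h2 (e2.1 ⟨h4, hyc⟩), fun hyc => h3 (e3.1 ⟨h4, hyc⟩)⟩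
        · intro h i
          have hgi := h i
          by_cases h1 : i ∈ A
          · have hc : c₁ i = c₂ i := by
              have := hA h1; rw [hE] at this; simpa using (Finset.mem_filter.1 this).2
            have hy : y i = c₁ i := by
              simp only [hg, if_pos (Or.inl h1)] at hgi; simpa using hgi
            refine ⟨⟨fun _ => h1, fun _ => ⟨hc, hy⟩⟩, ?_, ?_⟩
            · constructor
              · intro hh; exact absurd hc hh.1
              · intro hh
                have := hU hh; rw [hD] at this
                exact absurd hc (Finset.mem_filter.1 this).2
            · constructor
              · intro hh; exact absurd hc hh.1
              · intro hh
                have := hV hh; rw [hD] at this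
                exact absurd hc (Finset.mem_filter.1 this).2
          · by_cases h2 : i ∈ U
            · have hc : c₁ i ≠ c₂ i := by
                have := hU h2; rw [hD] at this; simpa using (Finset.mem_filter.1 this).2
              have hy : y i = c₁ i := by
                simp only [hg, if_pos (Or.inr h2)] at hgi; simpa using hgi
              have h3 : i ∉ V := Finset.disjoint_left.1 hUV h2
              refine ⟨⟨fun hh => absurd hh.1 hc, fun hh => absurd h1 (fun _ => h1 hh)⟩,
                ⟨fun _ => h2, fun _ => ⟨hc, hy⟩⟩, ?_⟩
              · constructor
                · intro hh; exact absurd (hy.symm.trans hh.2) hc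
                · intro hh; exact absurd hh h3
            · by_cases h3 : i ∈ V
              · have hc : c₁ i ≠ c₂ i := by
                  have := hV h3; rw [hD] at this; simpa using (Finset.mem_filter.1 this).2
                have hy : y i = c₂ i := by
                  simp only [hg] at hgi
                  rw [if_neg (by tauto), if_pos h3] at hgi
                  simpa using hgi
                refine ⟨⟨fun hh => absurd hh.1 hc, fun hh => absurd hh h1⟩,
                  ⟨fun hh => absurd (hh.2.symm.trans hy) hc, fun hh => absurd hh h2⟩,
                  ⟨fun _ => h3, fun _ => ⟨hc, hy⟩⟩⟩
              · simp only [hg] at hgi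
                rw [if_neg (by tauto), if_neg h3] at hgi
                by_cases h4 : c₁ i = c₂ i
                · rw [if_pos h4] at hgi
                  simp only [Finset.mem_compl, Finset.mem_singleton] at hgi
                  exact ⟨⟨fun hh => absurd hh.2 hgi, fun hh => absurd hh h1⟩,
                    ⟨fun hh => absurd h4 hh.1, fun hh => absurd hh h2⟩,
                    ⟨fun hh => absurd h4 hh.1, fun hh => absurd hh h3⟩⟩
                · rw [if_neg h4] at hgi
                  simp only [Finset.mem_compl, Finset.mem_insert, Finset.mem_singleton] at hgi
                  push_neg at hgi
                  exact ⟨⟨fun hh => absurd hh.1 h4, fun hh => absurd hh h1⟩,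
                    ⟨fun hh => absurd hh.2 hgi.1, fun hh => absurd hh h2⟩,
                    ⟨fun hh => absurd hh.2 hgi.2, fun hh => absurd hh h3⟩⟩
      rw [hfil, hpi, Fintype.card_piFinset]
      -- compute the product
      have hgc : ∀ i, (g i).card =
          if i ∈ A ∨ i ∈ U ∨ i ∈ V then 1 else if c₁ i = c₂ i then q - 1 else q - 2 := by
        intro i
        by_cases h1 : i ∈ A ∨ i ∈ U
        · simp only [hg, if_pos h1, Finset.card_singleton]
          rw [if_pos (by tauto)]
        · by_cases h2 : i ∈ V
          · simp only [hg, if_neg h1, if_pos h2, Finset.card_singleton]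
            rw [if_pos (by tauto)]
          · rw [if_neg (by tauto)]
            simp only [hg, if_neg h1, if_neg h2]
            by_cases h3 : c₁ i = c₂ i
            · rw [if_pos h3, if_pos h3, Finset.card_compl, Finset.card_singleton, hF]
            · rw [if_neg h3, if_neg h3, Finset.card_compl, Finset.card_pair h3, hF]
      calc ∏ i, (g i).card
          = ∏ i, (if i ∈ A ∨ i ∈ U ∨ i ∈ V then 1 else if c₁ i = c₂ i then q - 1 else q - 2) :=
            Finset.prod_congr rfl (fun i _ => hgc i)
        _ = (q - 1) ^ (n - w - A.card) * (q - 2) ^ (w - U.card - V.card) := by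
            rw [← Finset.prod_mul_prod_compl D]
            have hUVD : U ∪ V ⊆ D := Finset.union_subset hU hV
            have hAE : A ⊆ Dᶜ := by rw [← hEDc]; exact hA
            have hDpart : ∏ i ∈ D,
                (if i ∈ A ∨ i ∈ U ∨ i ∈ V then 1 else if c₁ i = c₂ i then q - 1 else q - 2)
                = (q - 2) ^ (w - U.card - V.card) := by
              rw [← Finset.prod_sdiff hUVD]
              have hp1 : ∏ i ∈ U ∪ V,
                  (if i ∈ A ∨ i ∈ U ∨ i ∈ V then 1 else if c₁ i = c₂ i then q - 1 else q - 2)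
                  = 1 := by
                apply Finset.prod_eq_one
                intro i hi
                rw [Finset.mem_union] at hi
                rw [if_pos (by tauto)]
              have hp2 : ∏ i ∈ D \ (U ∪ V),
                  (if i ∈ A ∨ i ∈ U ∨ i ∈ V then 1 else if c₁ i = c₂ i then q - 1 else q - 2)
                  = (q - 2) ^ (w - U.card - V.card) := by
                rw [Finset.prod_congr rfl (g := fun _ => (q-2)) ?_, Finset.prod_const,
                  Finset.card_sdiff_of_subset hUVD, Finset.card_union_of_disjoint hUV, hDc, Nat.sub_sub]
                intro i hi
                rw [Finset.mem_sdiff, Finset.mem_union] at hi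
                have hiA : i ∉ A := fun hh => (Finset.disjoint_left.1 hEDdis (hA hh)) hi.1
                have hc : c₁ i ≠ c₂ i := by
                  have := hi.1; rw [hD] at this; simpa using (Finset.mem_filter.1 this).2
                rw [if_neg (by tauto), if_neg hc]
              rw [hp1, hp2, mul_one]
            have hEpart : ∏ i ∈ Dᶜ,
                (if i ∈ A ∨ i ∈ U ∨ i ∈ V then 1 else if c₁ i = c₂ i then q - 1 else q - 2)
                = (q - 1) ^ (n - w - A.card) := by
              rw [← Finset.prod_sdiff hAE]
              have hp1 : ∏ i ∈ A,
                  (if i ∈ A ∨ i ∈ U ∨ i ∈ V then 1 else if c₁ i = c₂ i then q - 1 else q - 2)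
                  = 1 := by
                apply Finset.prod_eq_one
                intro i hi
                rw [if_pos (by tauto)]
              have hp2 : ∏ i ∈ Dᶜ \ A,
                  (if i ∈ A ∨ i ∈ U ∨ i ∈ V then 1 else if c₁ i = c₂ i then q - 1 else q - 2)
                  = (q - 1) ^ (n - w - A.card) := by
                rw [Finset.prod_congr rfl (g := fun _ => (q-1)) ?_, Finset.prod_const,
                  Finset.card_sdiff_of_subset hAE, ← hEDc, hEc]
                intro i hi
                rw [Finset.mem_sdiff, Finset.mem_compl] at hi
                have hiU : i ∉ U := fun hh => hi.1 (hU hh)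
                have hiV : i ∉ V := fun hh => hi.1 (hV hh)
                have hc : c₁ i = c₂ i := by
                  have : i ∈ E := by rw [hEDc, Finset.mem_compl]; exact hi.1
                  rw [hE] at this; simpa using (Finset.mem_filter.1 this).2
                rw [if_neg (by tauto), if_pos hc]
              rw [hp1, hp2, mul_one]
            rw [hDpart, hEpart, mul_comm]
    · rw [if_neg hcond, Finset.card_eq_zero, Finset.filter_eq_empty_iff]
      intro y hy hΦy
      have hUV : Disjoint U V := by
        rw [Finset.disjoint_left]
        intro i hiU hiV
        have hch := (hchar A U V y).1 hΦy i
        have h1 := hch.2.1.2 hiU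
        have h2 := hch.2.2.2 hiV
        exact h1.1 (h1.2.symm.trans h2.2)
      obtain ⟨e1, e2⟩ := hcards A U V hA hU hV y hΦy
      rw [hSdef, Finset.mem_filter] at hy
      exact hcond ⟨hUV, by rw [← e1]; exact hy.2.1, by rw [← e2]; exact hy.2.2⟩
  -- rewrite fibers
  rw [Finset.sum_congr rfl (fun A hA => Finset.sum_congr rfl (fun U hU =>
    Finset.sum_congr rfl (fun V hV => hfiber A hA U hU V hV)))]
  -- now pure sums over powersets; regroup by cardinalities
  have stepV : ∀ A ∈ E.powerset, ∀ U ∈ D.powerset,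
      (∑ V ∈ D.powerset,
        if Disjoint U V ∧ n - A.card - U.card ≤ τ ∧ n - A.card - V.card ≤ τ then
          (q - 1) ^ (n - w - A.card) * (q - 2) ^ (w - U.card - V.card)
        else 0)
      = ∑ v ∈ Finset.range (w - U.card + 1), (w - U.card).choose v *
          (if n - A.card - U.card ≤ τ ∧ n - A.card - v ≤ τ then
            (q - 1) ^ (n - w - A.card) * (q - 2) ^ (w - U.card - v) else 0) := by
    intro A hA U hU
    rw [Finset.mem_powerset] at hA hU
    have h1 : (∑ V ∈ D.powerset,
        if Disjoint U V ∧ n - A.card - U.card ≤ τ ∧ n - A.card - V.card ≤ τ then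
          (q - 1) ^ (n - w - A.card) * (q - 2) ^ (w - U.card - V.card)
        else 0)
        = ∑ V ∈ (D \ U).powerset,
        if Disjoint U V ∧ n - A.card - U.card ≤ τ ∧ n - A.card - V.card ≤ τ then
          (q - 1) ^ (n - w - A.card) * (q - 2) ^ (w - U.card - V.card)
        else 0 := by
      refine (Finset.sum_subset (Finset.powerset_mono.2 Finset.sdiff_subset) ?_).symm
      intro V hV hV'
      rw [Finset.mem_powerset] at hV hV'
      rw [if_neg]
      rintro ⟨hdis, -⟩
      apply hV'
      intro x hx
      rw [Finset.mem_sdiff]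
      exact ⟨hV hx, fun hxU => Finset.disjoint_left.1 hdis hxU hx⟩
    rw [h1]
    have h2 : ∀ V ∈ (D \ U).powerset,
        (if Disjoint U V ∧ n - A.card - U.card ≤ τ ∧ n - A.card - V.card ≤ τ then
          (q - 1) ^ (n - w - A.card) * (q - 2) ^ (w - U.card - V.card)
        else 0)
        = (if n - A.card - U.card ≤ τ ∧ n - A.card - V.card ≤ τ then
            (q - 1) ^ (n - w - A.card) * (q - 2) ^ (w - U.card - V.card) else 0) := by
      intro V hV
      rw [Finset.mem_powerset] at hV
      have hdis : Disjoint U V := Finset.disjoint_sdiff.mono_right hV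
      simp only [hdis, true_and]
    rw [Finset.sum_congr rfl h2,
      Finset.sum_powerset_apply_card (f := fun v =>
        if n - A.card - U.card ≤ τ ∧ n - A.card - v ≤ τ then
          (q - 1) ^ (n - w - A.card) * (q - 2) ^ (w - U.card - v) else 0),
      Finset.card_sdiff_of_subset hU, hDc]
    simp only [smul_eq_mul]
  rw [Finset.sum_congr rfl (fun A hA => Finset.sum_congr rfl (fun U hU => stepV A hA U hU))]
  have stepU : ∀ A ∈ E.powerset,
      (∑ U ∈ D.powerset, ∑ v ∈ Finset.range (w - U.card + 1), (w - U.card).choose v *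
          (if n - A.card - U.card ≤ τ ∧ n - A.card - v ≤ τ then
            (q - 1) ^ (n - w - A.card) * (q - 2) ^ (w - U.card - v) else 0))
      = ∑ u ∈ Finset.range (w + 1), w.choose u *
          ∑ v ∈ Finset.range (w - u + 1), (w - u).choose v *
          (if n - A.card - u ≤ τ ∧ n - A.card - v ≤ τ then
            (q - 1) ^ (n - w - A.card) * (q - 2) ^ (w - u - v) else 0) := by
    intro A hA
    rw [Finset.sum_powerset_apply_card (f := fun u => ∑ v ∈ Finset.range (w - u + 1),
      (w - u).choose v * (if n - A.card - u ≤ τ ∧ n - A.card - v ≤ τ then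
        (q - 1) ^ (n - w - A.card) * (q - 2) ^ (w - u - v) else 0)), hDc]
    simp only [smul_eq_mul]
  rw [Finset.sum_congr rfl stepU]
  have stepA :
      (∑ A ∈ E.powerset, ∑ u ∈ Finset.range (w + 1), w.choose u *
          ∑ v ∈ Finset.range (w - u + 1), (w - u).choose v *
          (if n - A.card - u ≤ τ ∧ n - A.card - v ≤ τ then
            (q - 1) ^ (n - w - A.card) * (q - 2) ^ (w - u - v) else 0))
      = ∑ z ∈ Finset.range (n - w + 1), (n - w).choose z *
          ∑ u ∈ Finset.range (w + 1), w.choose u *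
          ∑ v ∈ Finset.range (w - u + 1), (w - u).choose v *
          (if n - z - u ≤ τ ∧ n - z - v ≤ τ then
            (q - 1) ^ (n - w - z) * (q - 2) ^ (w - u - v) else 0) := by
    rw [Finset.sum_powerset_apply_card (f := fun z => ∑ u ∈ Finset.range (w + 1), w.choose u *
          ∑ v ∈ Finset.range (w - u + 1), (w - u).choose v *
          (if n - z - u ≤ τ ∧ n - z - v ≤ τ then
            (q - 1) ^ (n - w - z) * (q - 2) ^ (w - u - v) else 0)), hEc]
    simp only [smul_eq_mul]
  rw [stepA]
  -- final arithmetic identity, pointwise in z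
  apply Finset.sum_congr rfl
  intro z hz
  rw [Finset.mem_range] at hz
  have hz' : z ≤ n - w := by omega
  rw [mul_assoc]
  congr 1
  -- both sides equal a common double sum over range (w + τ + 1)
  set M := w + τ + 1 with hM
  set P : ℕ → ℕ → ℕ := fun u v =>
    if n - τ - z ≤ u ∧ n - τ - z ≤ v ∧ u + v ≤ w then
      w.choose u * ((w - u).choose v *
        ((q - 1) ^ (n - w - z) * (q - 2) ^ (w - u - v)))
    else 0 with hP
  have hPvan1 : ∀ u v, w < u ∨ (u ≤ w ∧ w - u < v) → P u v = 0 := by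
    intro u v h
    simp only [hP]
    rw [if_neg (by omega)]
  have hPvan2 : ∀ u v, τ < u ∨ τ < v → P u v = 0 := by
    intro u v h
    simp only [hP]
    rw [if_neg (by omega)]
  have hLHS : (∑ u ∈ Finset.range (w + 1), w.choose u *
          ∑ v ∈ Finset.range (w - u + 1), (w - u).choose v *
          (if n - z - u ≤ τ ∧ n - z - v ≤ τ then
            (q - 1) ^ (n - w - z) * (q - 2) ^ (w - u - v) else 0))
      = ∑ u ∈ Finset.range M, ∑ v ∈ Finset.range M, P u v := by
    have huext : ∀ u ∈ Finset.range (w + 1), (w.choose u *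
          ∑ v ∈ Finset.range (w - u + 1), (w - u).choose v *
          (if n - z - u ≤ τ ∧ n - z - v ≤ τ then
            (q - 1) ^ (n - w - z) * (q - 2) ^ (w - u - v) else 0))
        = ∑ v ∈ Finset.range M, P u v := by
      intro u hu
      rw [Finset.mem_range] at hu
      have e1 : ∀ v ∈ Finset.range (w - u + 1),
          w.choose u * ((w - u).choose v *
            (if n - z - u ≤ τ ∧ n - z - v ≤ τ then
              (q - 1) ^ (n - w - z) * (q - 2) ^ (w - u - v) else 0)) = P u v := by
        intro v hv
        rw [Finset.mem_range] at hv
        simp only [hP, mul_ite, mul_zero]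
        refine if_congr ?_ (by ring) rfl
        constructor
        · rintro ⟨a, b⟩; exact ⟨by omega, by omega, by omega⟩
        · rintro ⟨a, b, c⟩; exact ⟨by omega, by omega⟩
      have e2 : (∑ v ∈ Finset.range (w - u + 1), P u v)
          = ∑ v ∈ Finset.range M, P u v := by
        refine Finset.sum_subset (Finset.range_subset_range.2 (by omega : w - u + 1 ≤ M)) ?_
        intro v hv hv'
        rw [Finset.mem_range] at hv hv'
        exact hPvan1 u v (by omega)
      rw [Finset.mul_sum, Finset.sum_congr rfl e1, e2]
    rw [Finset.sum_congr rfl huext]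
    refine Finset.sum_subset (Finset.range_subset_range.2 (by omega : w + 1 ≤ M)) ?_
    intro u hu hu'
    rw [Finset.mem_range] at hu hu'
    exact Finset.sum_eq_zero fun v hv => hPvan1 u v (by omega)
  have hRHS : ((q - 1) ^ (n - w - z) *
        ∑ u ∈ Finset.range (τ + 1), ∑ v ∈ Finset.range (τ + 1),
          if n - τ - z ≤ u ∧ n - τ - z ≤ v ∧ u + v ≤ w then
            w.choose u * (w - u).choose v * (q - 2) ^ (w - u - v)
          else 0)
      = ∑ u ∈ Finset.range M, ∑ v ∈ Finset.range M, P u v := by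
    simp only [Finset.mul_sum, mul_ite, mul_zero]
    have hpt : ∀ u ∈ Finset.range (τ + 1), ∀ v ∈ Finset.range (τ + 1),
        (if n - τ - z ≤ u ∧ n - τ - z ≤ v ∧ u + v ≤ w then
          (q - 1) ^ (n - w - z) * (w.choose u * (w - u).choose v * (q - 2) ^ (w - u - v))
        else 0) = P u v := by
      intro u _ v _
      simp only [hP]
      exact if_congr Iff.rfl (by ring) rfl
    rw [Finset.sum_congr rfl (fun u hu => Finset.sum_congr rfl (fun v hv => hpt u hu v hv))]
    have hinner : ∀ u ∈ Finset.range (τ + 1),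
        (∑ v ∈ Finset.range (τ + 1), P u v) = ∑ v ∈ Finset.range M, P u v := by
      intro u hu
      refine Finset.sum_subset (Finset.range_subset_range.2 (by omega : τ + 1 ≤ M)) ?_
      intro v hv hv'
      rw [Finset.mem_range] at hv hv'
      exact hPvan2 u v (by omega)
    rw [Finset.sum_congr rfl hinner]
    refine Finset.sum_subset (Finset.range_subset_range.2 (by omega : τ + 1 ≤ M)) ?_
    intro u hu hu'
    rw [Finset.mem_range] at hu hu'
    exact Finset.sum_eq_zero fun v hv => hPvan2 u v (by omega)
  rw [hLHS, ← hRHS]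
end

section
/- Let y ∈ ℂ^n and c ∈ ℂ^n with |c_j| = 1 for all j, and let A ⊆ {1,…,n} be a set of indices such that for all j ∈ A, the phase of y_j^* c_j lies in [−π/p, π/p) for an integer p ≥ 3. Let B = {1,…,n} \ A. Then |⟨y, c⟩| ≥ c₀ · Σ_{j∈A} |y_j| − Σ_{j∈B} |y_j|, where c₀ = √(cos(2π/p)). -/
open Real

/-! Every term `z_j = y_j^* c_j` with `j ∈ A` has phase within `π/p` of `0`, so its real part is
at least `cos(π/p) |y_j|`, while the remaining terms have real part at least `-|y_j|`. Hence
`|⟨y, c⟩| ≥ Re ⟨y, c⟩ ≥ cos(π/p) Σ_{j∈A} |y_j| − Σ_{j∉A} |y_j|`, and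
`√(cos(2π/p)) ≤ cos(π/p)` because `cos(2x) = 2 cos² x − 1 ≤ cos² x`. -/

theorem Real.sqrt_cos_two_mul_le_cos {x : ℝ} (hx : 0 ≤ cos x) : √(cos (2 * x)) ≤ cos x := by
  have h : cos (2 * x) ≤ cos x ^ 2 := by
    rw [cos_two_mul]
    nlinarith [cos_sq_le_one x]
  calc √(cos (2 * x)) ≤ √(cos x ^ 2) := sqrt_le_sqrt h
    _ = cos x := sqrt_sq hx

theorem Complex.cos_mul_norm_le_re {z : ℂ} {θ : ℝ} (hθ : θ ≤ π) (harg : |z.arg| ≤ θ) :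
    Real.cos θ * ‖z‖ ≤ z.re := by
  have h : Real.cos θ ≤ Real.cos z.arg := by
    rw [← Real.cos_abs z.arg]
    exact cos_le_cos_of_nonneg_of_le_pi (abs_nonneg _) hθ harg
  rw [← Complex.norm_mul_cos_arg, mul_comm]
  exact mul_le_mul_of_nonneg_left h (norm_nonneg z)

theorem Complex.mul_sum_norm_sub_sum_compl_norm_le_norm_sum {ι : Type*} [Fintype ι] [DecidableEq ι]
    (z : ι → ℂ) (A : Finset ι) (a : ℝ) (h : ∀ j ∈ A, a * ‖z j‖ ≤ (z j).re) :
    a * ∑ j ∈ A, ‖z j‖ - ∑ j ∈ Aᶜ, ‖z j‖ ≤ ‖∑ j, z j‖ := by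
  have hA : a * ∑ j ∈ A, ‖z j‖ ≤ ∑ j ∈ A, (z j).re := by
    rw [Finset.mul_sum]
    exact Finset.sum_le_sum h
  have hAc : -∑ j ∈ Aᶜ, ‖z j‖ ≤ ∑ j ∈ Aᶜ, (z j).re := by
    rw [← Finset.sum_neg_distrib]
    exact Finset.sum_le_sum fun j _ => neg_le_of_abs_le (Complex.abs_re_le_norm (z j))
  calc a * ∑ j ∈ A, ‖z j‖ - ∑ j ∈ Aᶜ, ‖z j‖
      ≤ ∑ j ∈ A, (z j).re + ∑ j ∈ Aᶜ, (z j).re := by linarith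
    _ = (∑ j, z j).re := by rw [Finset.sum_add_sum_compl, Complex.re_sum]
    _ ≤ ‖∑ j, z j‖ := Complex.re_le_norm _

/-- If `|c_j| = 1` for all `j` and the phase of `y_j^* c_j` lies in `[-π/p, π/p)` for all
`j ∈ A` (with `p ≥ 3`), then `|⟨y, c⟩| ≥ √(cos(2π/p)) Σ_{j∈A} |y_j| − Σ_{j∉A} |y_j|`. -/
theorem stmt18 (n p : ℕ) (hp : 3 ≤ p) (y c : Fin n → ℂ)
    (hc : ∀ j, ‖c j‖ = 1)
    (A : Finset (Fin n))
    (hA : ∀ j ∈ A, ((starRingEnd ℂ) (y j) * c j).arg ∈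
      Set.Ico (-(π / p)) (π / p)) :
    Real.sqrt (Real.cos (2 * π / p)) * ∑ j ∈ A, ‖y j‖
        - ∑ j ∈ Aᶜ, ‖y j‖ ≤
      ‖∑ j, (starRingEnd ℂ) (y j) * c j‖ := by
  have hnorm : ∀ j, ‖(starRingEnd ℂ) (y j) * c j‖ = ‖y j‖ := fun j => by simp [hc j]
  have hπp : π / p ≤ π / 2 :=
    div_le_div_of_nonneg_left pi_pos.le two_pos (by exact_mod_cast (by omega : 2 ≤ p))
  have hπp_nonneg : 0 ≤ π / p := by positivity
  have hcos : 0 ≤ cos (π / p) := cos_nonneg_of_mem_Icc ⟨by linarith [pi_pos], hπp⟩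
  have hsqrt : √(cos (2 * π / p)) ≤ cos (π / p) := by
    rw [mul_div_assoc]
    exact sqrt_cos_two_mul_le_cos hcos
  have hre : ∀ j ∈ A, cos (π / p) * ‖(starRingEnd ℂ) (y j) * c j‖ ≤
      ((starRingEnd ℂ) (y j) * c j).re := fun j hj =>
    Complex.cos_mul_norm_le_re (by linarith [pi_pos])
      (abs_le.mpr ⟨(hA j hj).1, (hA j hj).2.le⟩)
  have hmain := Complex.mul_sum_norm_sub_sum_compl_norm_le_norm_sum _ A _ hre
  simp only [hnorm] at hmain
  have hA_nonneg : 0 ≤ ∑ j ∈ A, ‖y j‖ := Finset.sum_nonneg fun j _ => norm_nonneg _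
  linarith [mul_le_mul_of_nonneg_right hsqrt hA_nonneg]
end
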